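/- arXiv:math/9304213 — 5 statements merged into one kernel-verified Lean document; each statement's English description precedes it below -/
import Mathlib

section
/- In ℝⁿ, a Borel set S is shy if and only if S has Lebesgue measure zero. -/
open MeasureTheory

/-- A Borel set `S` is *shy* if there is a compactly supported Borel probability
measure `μ` such that every translate of `S` has `μ`-measure zero. -/
def IsShyBorel {X : Type*} [AddGroup X] [TopologicalSpace X] [MeasurableSpace X]
    (S : Set X) : Prop :=
  MeasurableSet S ∧ ∃ μ : Measure X, IsProbabilityMeasure μ ∧
    (∃ K : Set X, IsCompact K ∧ μ Kᶜ = 0) ∧ ∀ x : X, μ ((· + x) '' S) = 0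

/-- A set is *shy* if it is contained in a shy Borel set. -/
def IsShy {X : Type*} [AddGroup X] [TopologicalSpace X] [MeasurableSpace X]
    (S : Set X) : Prop :=
  ∃ T, S ⊆ T ∧ IsShyBorel T

/-- A set is *prevalent* if its complement is shy. -/
def Prevalent {X : Type*} [AddGroup X] [TopologicalSpace X] [MeasurableSpace X]
    (S : Set X) : Prop :=
  IsShy Sᶜ

open Metric ENNReal

variable {n : ℕ}

local notation "E" => EuclideanSpace ℝ (Fin n)

theorem shy_iff_volume_zero' (S : Set (EuclideanSpace ℝ (Fin n)))
    (hS : MeasurableSet S) :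
    (MeasurableSet S ∧ ∃ μ : Measure (EuclideanSpace ℝ (Fin n)), IsProbabilityMeasure μ ∧
      (∃ K, IsCompact K ∧ μ Kᶜ = 0) ∧ ∀ x, μ ((· + x) '' S) = 0) ↔ volume S = 0 := by
  constructor
  · rintro ⟨-, μ, hprob, -, hnull⟩
    have key : ∀ x : E, μ ((fun y => y + -x) ⁻¹' S) = 0 := fun x => by
      rw [← Set.image_add_right]; exact hnull x
    have hmeas : Measurable (Function.uncurry fun x y : E => S.indicator (1 : E → ℝ≥0∞) (y + -x)) :=
      (measurable_const.indicator hS).comp (measurable_snd.add measurable_fst.neg)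
    have swap := lintegral_lintegral_swap (μ := (volume : Measure E)) (ν := μ)
      (f := fun x y => S.indicator (1 : E → ℝ≥0∞) (y + -x)) hmeas.aemeasurable
    have left : ∫⁻ x, ∫⁻ y, S.indicator (1 : E → ℝ≥0∞) (y + -x) ∂μ ∂(volume : Measure E) = 0 := by
      have h0 : ∀ x : E, ∫⁻ y, S.indicator (1 : E → ℝ≥0∞) (y + -x) ∂μ = 0 := by
        intro x
        have h1 : (fun y : E => S.indicator (1 : E → ℝ≥0∞) (y + -x))
            = ((fun y : E => y + -x) ⁻¹' S).indicator 1 := by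
          funext y; by_cases h : y + -x ∈ S <;> simp [Set.indicator, h]
        rw [h1, lintegral_indicator_one (hS.preimage (measurable_add_const _))]
        exact key x
      simp [h0]
    have right : ∫⁻ y, ∫⁻ x, S.indicator (1 : E → ℝ≥0∞) (y + -x) ∂(volume : Measure E) ∂μ
        = volume S := by
      have h0 : ∀ y : E, ∫⁻ x, S.indicator (1 : E → ℝ≥0∞) (y + -x) ∂(volume : Measure E)
          = volume S := by
        intro y
        have h1 : (fun x : E => S.indicator (1 : E → ℝ≥0∞) (y + -x))
            = ((fun x : E => y + -x) ⁻¹' S).indicator 1 := by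
          funext x; by_cases h : y + -x ∈ S <;> simp [Set.indicator, h]
        rw [h1, lintegral_indicator_one (hS.preimage (show Measurable (fun x : E => y + -x) from measurable_const.add measurable_neg))]
        have h2 : (fun x : E => y + -x) ⁻¹' S = Neg.neg ⁻¹' ((fun x : E => y + x) ⁻¹' S) := rfl
        rw [h2, Measure.measure_preimage_neg, measure_preimage_add]
      rw [lintegral_congr h0, lintegral_const, measure_univ, mul_one]
    rw [left, right] at swap
    exact swap.symm
  · intro hvol
    refine ⟨hS, (volume (closedBall (0:E) 1))⁻¹ • volume.restrict (closedBall 0 1), ?_, ?_, ?_⟩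
    · constructor
      simp only [Measure.smul_apply, Measure.restrict_apply MeasurableSet.univ,
        Set.univ_inter, smul_eq_mul]
      exact ENNReal.inv_mul_cancel (measure_closedBall_pos _ _ one_pos).ne'
        measure_closedBall_lt_top.ne
    · refine ⟨closedBall 0 1, isCompact_closedBall _ _, ?_⟩
      simp [Measure.restrict_apply measurableSet_closedBall.compl]
    · intro x
      have h0 : volume ((· + x) '' S) = 0 := by
        rw [Set.image_add_right, measure_preimage_add_right]; exact hvol
      simp only [Measure.smul_apply, smul_eq_mul]
      rw [Measure.restrict_apply]
      · exact mul_eq_zero.2 (Or.inr (measure_mono_null Set.inter_subset_left h0))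
      · rw [Set.image_add_right]; exact hS.preimage (measurable_add_const _)

theorem shy_iff_volume_zero {n : ℕ} (S : Set (EuclideanSpace ℝ (Fin n)))
    (hS : MeasurableSet S) : IsShyBorel S ↔ volume S = 0 := shy_iff_volume_zero' S hS
end

section
/- In a complete metric linear space, the complement of a shy Borel set is dense. Equivalently, every prevalent set is dense. -/
open MeasureTheory

open Topology

/-! A shy set cannot contain an open set `U ∋ x₀`: the translates `U + (k - x₀)`, `k ∈ K`, are
`μ`-null neighbourhoods of the points of the compact set `K` carrying the witness measure `μ`, so by
compactness `K` itself would be `μ`-null, which is absurd for a probability measure living on `K`. -/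

section

variable {G : Type*} [AddGroup G] [TopologicalSpace G] [SeparatelyContinuousAdd G]

theorem image_add_right_mem_nhds_of_mem_interior {S : Set G} {x : G} (hx : x ∈ interior S)
    (y : G) : (· + (-x + y)) '' S ∈ 𝓝 y := by
  refine Filter.mem_of_superset ?_ (Set.image_mono interior_subset)
  refine (isOpenMap_add_right _ _ isOpen_interior).mem_nhds ⟨x, hx, ?_⟩
  simp only [add_neg_cancel_left]

variable [MeasurableSpace G]

theorem IsCompact.measure_eq_zero_of_translates_null {μ : Measure G} {S K : Set G}
    (hK : IsCompact K) (hS : (interior S).Nonempty) (hnull : ∀ x, μ ((· + x) '' S) = 0) :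
    μ K = 0 := by
  obtain ⟨x, hx⟩ := hS
  refine hK.measure_zero_of_nhdsWithin fun y _ => ⟨_, ?_, hnull (-x + y)⟩
  exact mem_nhdsWithin_of_mem_nhds (image_add_right_mem_nhds_of_mem_interior hx y)

theorem IsShyBorel.interior_eq_empty {S : Set G} (hS : IsShyBorel S) : interior S = ∅ := by
  obtain ⟨-, μ, hμ, ⟨K, hK, hKc⟩, hnull⟩ := hS
  by_contra hint
  have hK0 : μ K = 0 :=
    hK.measure_eq_zero_of_translates_null (Set.nonempty_iff_ne_empty.2 hint) hnull
  have huniv : μ Set.univ = 0 := by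
    rw [← Set.union_compl_self K]
    exact measure_union_null hK0 hKc
  exact one_ne_zero (measure_univ.symm.trans huniv)

end

theorem compl_shy_dense_general {X : Type*} [AddCommGroup X] [MetricSpace X]
    [IsTopologicalAddGroup X] [MeasurableSpace X]
    (S : Set X) (hS : IsShyBorel S) : Dense Sᶜ :=
  interior_eq_empty_iff_dense_compl.1 hS.interior_eq_empty

theorem compl_shy_dense {X : Type*} [AddCommGroup X] [Module ℝ X] [MetricSpace X] [CompleteSpace X]
    [IsTopologicalAddGroup X] [ContinuousSMul ℝ X] [MeasurableSpace X] [BorelSpace X]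
    (S : Set X) (hS : IsShyBorel S) : Dense Sᶜ :=
  compl_shy_dense_general S hS
end

section
/- In an infinite-dimensional complete metric linear space, every compact set is shy. -/
/-!
Let `K` be compact and take for `μ` the uniform measure on a segment `[0, v]`. If a translate
`K + x` had positive `μ`-measure, the set `A = {t ∈ [0, 1] | t • v ∈ K + x}` would have positive
Lebesgue measure, so by Steinhaus' theorem `A - A` would contain a neighbourhood of `0`, i.e.
`s • v ∈ K - K` for all small `s`. It remains to choose `v` so that this fails, which is possible
in infinite dimension because the compact set `K - K` cannot absorb every direction.
-/

open MeasureTheory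

open Filter Set Topology
open scoped Pointwise

section Direction

variable {X : Type*} [AddCommGroup X] [Module ℝ X] [TopologicalSpace X] [T2Space X]
  [IsTopologicalAddGroup X] [ContinuousSMul ℝ X]

/-- If every vector had a small multiple in `C`, the dilates `n • C` would cover `X`; by Baire one
of them would be a compact set with nonempty interior, making `X` locally compact, hence
finite-dimensional by Riesz's theorem. -/
theorem exists_frequently_smul_notMem_of_isCompact [BaireSpace X]
    (hinf : ¬ FiniteDimensional ℝ X) {C : Set X} (hC : IsCompact C) :
    ∃ v : X, ∃ᶠ s in 𝓝 (0 : ℝ), s • v ∉ C := by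
  by_contra! h
  have hcover : ⋃ n : ℕ, (n : ℝ) • C = univ := by
    refine eq_univ_of_forall fun v => mem_iUnion.2 ?_
    obtain ⟨n, hnC, hn⟩ := ((tendsto_one_div_atTop_nhds_zero_nat.eventually (h v)).and
      (eventually_ne_atTop 0)).exists
    refine ⟨n, mem_smul_set.2 ⟨_, hnC, ?_⟩⟩
    rw [smul_smul, mul_one_div_cancel (Nat.cast_ne_zero.2 hn), one_smul]
  obtain ⟨n, x, hx⟩ :=
    nonempty_interior_of_iUnion_of_closed (fun n : ℕ => (hC.smul (n : ℝ)).isClosed) hcover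
  have := (hC.smul (n : ℝ)).locallyCompactSpace_of_mem_nhds_of_addGroup
    (mem_interior_iff_mem_nhds.1 hx)
  exact hinf (.of_locallyCompactSpace ℝ)

end Direction

section SegmentMeasure

variable {X : Type*} [AddCommGroup X] [Module ℝ X] [MeasurableSpace X]

noncomputable def segmentMeasure (v : X) : Measure X :=
  (volume.restrict (Icc (0 : ℝ) 1)).map (· • v)

variable [TopologicalSpace X] [ContinuousSMul ℝ X] [BorelSpace X]

instance isProbabilityMeasure_segmentMeasure (v : X) : IsProbabilityMeasure (segmentMeasure v) :=
  have : IsProbabilityMeasure (volume.restrict (Icc (0 : ℝ) 1)) := ⟨by simp⟩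
  Measure.isProbabilityMeasure_map (by fun_prop)

theorem exists_isCompact_segmentMeasure_compl_eq_zero [T2Space X] (v : X) :
    ∃ K : Set X, IsCompact K ∧ segmentMeasure v Kᶜ = 0 := by
  have hcompact : IsCompact ((· • v) '' Icc (0 : ℝ) 1) :=
    isCompact_Icc.image (continuous_id.smul continuous_const)
  refine ⟨_, hcompact, ?_⟩
  rw [segmentMeasure, Measure.map_apply (by fun_prop) hcompact.isClosed.measurableSet.compl]
  exact measure_mono_null (fun t ht htI => ht (mem_image_of_mem _ htI))
    (ae_restrict_mem measurableSet_Icc)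

theorem volume_preimage_smul_eq_zero {S : Set X} (hS : MeasurableSet S) {v : X}
    (hv : ∃ᶠ s in 𝓝 (0 : ℝ), s • v ∉ S - S) : volume ((fun t : ℝ => t • v) ⁻¹' S) = 0 := by
  by_contra hpos
  have hsteinhaus := Measure.sub_mem_nhds_zero_of_addHaar_pos volume _
    ((by fun_prop : Measurable fun t : ℝ => t • v) hS) (pos_iff_ne_zero.2 hpos)
  obtain ⟨_, hs, t₁, ht₁, t₂, ht₂, rfl⟩ := (hv.and_eventually hsteinhaus).exists
  exact hs ⟨_, ht₁, _, ht₂, (sub_smul t₁ t₂ v).symm⟩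

theorem segmentMeasure_eq_zero {S : Set X} (hS : MeasurableSet S) {v : X}
    (hv : ∃ᶠ s in 𝓝 (0 : ℝ), s • v ∉ S - S) : segmentMeasure v S = 0 := by
  rw [segmentMeasure, Measure.map_apply (by fun_prop) hS]
  exact nonpos_iff_eq_zero.1 <|
    (Measure.restrict_apply_le _ _).trans_eq (volume_preimage_smul_eq_zero hS hv)

end SegmentMeasure

theorem Set.image_add_right_sub_image_add_right_subset {G : Type*} [AddCommGroup G] (S : Set G)
    (x : G) : (· + x) '' S - (· + x) '' S ⊆ S - S := by
  rintro _ ⟨_, ⟨a, ha, rfl⟩, _, ⟨b, hb, rfl⟩, rfl⟩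
  exact ⟨a, ha, b, hb, (add_sub_add_right_eq_sub a b x).symm⟩

theorem compact_shy {X : Type*} [AddCommGroup X] [Module ℝ X] [MetricSpace X] [CompleteSpace X]
    [IsTopologicalAddGroup X] [ContinuousSMul ℝ X] [MeasurableSpace X] [BorelSpace X]
    (hinf : ¬ FiniteDimensional ℝ X) (K : Set X) (hK : IsCompact K) : IsShy K := by
  have hKK : IsCompact (K - K) := by simpa only [sub_eq_add_neg] using hK.add hK.neg
  obtain ⟨v, hv⟩ := exists_frequently_smul_notMem_of_isCompact hinf hKK
  refine ⟨K, subset_rfl, hK.isClosed.measurableSet, segmentMeasure v, inferInstance,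
    exists_isCompact_segmentMeasure_compl_eq_zero v, fun x => ?_⟩
  have hKx : IsCompact ((· + x) '' K) := hK.image (continuous_add_const x)
  exact segmentMeasure_eq_zero hKx.isClosed.measurableSet
    (hv.mono fun _ hs hmem => hs (K.image_add_right_sub_image_add_right_subset x hmem))
end

section
/- Let X be a complete metric linear space and S ⊆ X a Borel set. If there is a finite-dimensional subspace V ⊆ X such that for every x ∈ X the set (S + x) ∩ V has V-Lebesgue measure zero, then S is shy. -/
/-! The image under `e` of Lebesgue measure on the unit cube is a compactly supported probability
measure on `X`, and the mass it gives a translate `S + x` is at most the Lebesgue measure of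
`e⁻¹' (S + x)`, which vanishes by hypothesis. -/

open MeasureTheory

open Set

section

variable {E X : Type*} [TopologicalSpace E] [MeasurableSpace E] [OpensMeasurableSpace E]
  [TopologicalSpace X] [MeasurableSpace X] [BorelSpace X]

theorem MeasureTheory.Measure.map_compl_image_eq_zero [T2Space X] {f : E → X} (hf : Continuous f)
    {ν : Measure E} {C : Set E} (hC : IsCompact C) (hνC : ν Cᶜ = 0) :
    ν.map f (f '' C)ᶜ = 0 := by
  rw [Measure.map_apply hf.measurable (hC.image hf).isClosed.measurableSet.compl]
  exact measure_mono_null (fun c hc hcC => hc (mem_image_of_mem f hcC)) hνC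

theorem isShyBorel_of_continuous_probe [AddGroup X] [ContinuousAdd X] [T2Space X]
    {S : Set X} (hS : MeasurableSet S) {f : E → X} (hf : Continuous f) (ν : Measure E)
    [IsProbabilityMeasure ν] {C : Set E} (hC : IsCompact C) (hνC : ν Cᶜ = 0)
    (hν : ∀ x, ν (f ⁻¹' ((· + x) '' S)) = 0) : IsShyBorel S := by
  refine ⟨hS, ν.map f, Measure.isProbabilityMeasure_map hf.aemeasurable,
    ⟨f '' C, hC.image hf, Measure.map_compl_image_eq_zero hf hC hνC⟩, fun x => ?_⟩
  have hSx : MeasurableSet ((· + x) '' S) := by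
    rw [image_add_right]
    exact measurable_add_const _ hS
  rw [Measure.map_apply hf.measurable hSx, hν x]

end

theorem probe_implies_shy_general {X : Type*} [AddCommGroup X] [Module ℝ X] [MetricSpace X]
    [IsTopologicalAddGroup X] [ContinuousSMul ℝ X] [MeasurableSpace X] [BorelSpace X]
    (S : Set X) (hS : MeasurableSet S) (k : ℕ) (e : (Fin k → ℝ) →ₗ[ℝ] X)
    (h : ∀ x : X, volume {c : Fin k → ℝ | e c ∈ (· + x) '' S} = 0) :
    IsShyBorel S := by
  let cube : Set (Fin k → ℝ) := Icc 0 1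
  have : IsProbabilityMeasure (volume.restrict cube) := ⟨by simp [cube, Real.volume_Icc_pi]⟩
  refine isShyBorel_of_continuous_probe hS e.continuous_of_finiteDimensional
    (volume.restrict cube) isCompact_Icc (ae_restrict_mem measurableSet_Icc) fun x => ?_
  exact nonpos_iff_eq_zero.1 ((Measure.restrict_apply_le _ _).trans_eq (h x))

theorem probe_implies_shy {X : Type*} [AddCommGroup X] [Module ℝ X] [MetricSpace X] [CompleteSpace X]
    [IsTopologicalAddGroup X] [ContinuousSMul ℝ X] [MeasurableSpace X] [BorelSpace X]
    (S : Set X) (hS : MeasurableSet S) (k : ℕ) (e : (Fin k → ℝ) →ₗ[ℝ] X)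
    (he : Function.Injective e)
    (h : ∀ x : X, volume {c : Fin k → ℝ | e c ∈ (· + x) '' S} = 0) :
    IsShyBorel S :=
  probe_implies_shy_general S hS k e h
end

section
/- In a separable Banach space X, a Borel set S is shy (i.e., Haar null in Christensen's sense) if and only if there exists a Borel probability measure μ on X (not necessarily compactly supported) such that μ(S + x) = 0 for all x ∈ X. -/
open MeasureTheory

section
open Metric Set Filter ENNReal

lemma exists_compact_pos_measure {X : Type*} [MetricSpace X] [CompleteSpace X]
    [TopologicalSpace.SeparableSpace X] [Nonempty X]
    [MeasurableSpace X] [OpensMeasurableSpace X]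
    (μ : Measure X) [IsProbabilityMeasure μ] :
    ∃ K : Set X, IsCompact K ∧ 0 < μ K := by
  obtain ⟨u, hu⟩ : ∃ u : ℕ → X, DenseRange u := ⟨_, TopologicalSpace.denseRange_denseSeq X⟩
  have key : ∀ n : ℕ, ∃ N : ℕ,
      μ (⋃ m ≤ N, closedBall (u m) (1 / (n + 1 : ℝ)))ᶜ ≤ 2⁻¹ ^ (n + 2) := by
    intro n
    set B : ℕ → Set X := fun m => closedBall (u m) (1 / (n + 1 : ℝ)) with hB
    have hcover : (⋃ m, B m) = univ := by
      ext x
      simp only [mem_iUnion, mem_univ, iff_true]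
      obtain ⟨m, hm⟩ := Metric.denseRange_iff.1 hu x (1 / (n + 1 : ℝ)) (by positivity)
      exact ⟨m, hm.le⟩
    have htend : Tendsto (fun N => μ (accumulate B N)) atTop (nhds (μ (⋃ m, B m))) :=
      tendsto_measure_iUnion_accumulate
    rw [hcover, measure_univ] at htend
    have hlt : (1 : ℝ≥0∞) - 2⁻¹ ^ (n + 2) < 1 := by
      exact ENNReal.sub_lt_self one_ne_top one_ne_zero
        (pow_ne_zero _ (ENNReal.inv_ne_zero.2 ofNat_ne_top))
    obtain ⟨N, hN⟩ := (htend.eventually (eventually_gt_nhds hlt)).exists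
    refine ⟨N, ?_⟩
    have hmeas : MeasurableSet (accumulate B N) := by
      apply MeasurableSet.biUnion (Set.to_countable _)
      intro m _
      exact measurableSet_closedBall
    have heq : accumulate B N = ⋃ m ≤ N, B m := rfl
    rw [← heq, measure_compl hmeas (measure_ne_top μ _), measure_univ]
    have hc : (2⁻¹ : ℝ≥0∞) ^ (n + 2) ≤ 1 := pow_le_one' (by simp) _
    have h1 : (1 : ℝ≥0∞) < μ (accumulate B N) + 2⁻¹ ^ (n + 2) :=
      (ENNReal.sub_lt_iff_lt_right (by simp [ENNReal.pow_ne_top]) hc).1 hN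
    exact tsub_le_iff_right.2 (by rw [add_comm] at h1; exact h1.le)
  choose N hN using key
  set F : ℕ → Set X := fun n => ⋃ m ≤ N n, closedBall (u m) (1 / (n + 1 : ℝ)) with hF
  have hFclosed : ∀ n, IsClosed (F n) :=
    fun n => Set.Finite.isClosed_biUnion (Set.finite_Iic _) fun m _ => isClosed_closedBall
  set K : Set X := ⋂ n, F n with hK
  have hKclosed : IsClosed K := isClosed_iInter hFclosed
  have hKtb : TotallyBounded K := by
    rw [Metric.totallyBounded_iff]
    intro ε hε
    obtain ⟨n, hn⟩ := exists_nat_one_div_lt hε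
    refine ⟨u '' Iic (N n), (Set.finite_Iic _).image _, ?_⟩
    intro x hx
    have hx' : x ∈ F n := mem_iInter.1 hx n
    simp only [hF, mem_iUnion] at hx'
    obtain ⟨m, hm, hxm⟩ := hx'
    simp only [mem_iUnion, mem_image]
    exact ⟨u m, ⟨m, hm, rfl⟩, lt_of_le_of_lt hxm hn⟩
  refine ⟨K, hKtb.isCompact_of_isClosed hKclosed, ?_⟩
  have hcompl : μ Kᶜ ≤ 2⁻¹ := by
    have hco : Kᶜ = ⋃ n, (F n)ᶜ := by rw [hK, compl_iInter]
    rw [hco]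
    calc μ (⋃ n, (F n)ᶜ) ≤ ∑' n, μ (F n)ᶜ := measure_iUnion_le _
    _ ≤ ∑' n : ℕ, (2⁻¹ : ℝ≥0∞) ^ (n + 2) := ENNReal.tsum_le_tsum hN
    _ = 2⁻¹ := by
        rw [show (fun n : ℕ => (2⁻¹ : ℝ≥0∞) ^ (n + 2)) = fun n => 2⁻¹ ^ 2 * 2⁻¹ ^ n by
          funext n; rw [pow_add, mul_comm]]
        rw [ENNReal.tsum_mul_left, ENNReal.tsum_geometric, ENNReal.one_sub_inv_two,
          inv_inv, sq, mul_assoc, ENNReal.inv_mul_cancel two_ne_zero ENNReal.ofNat_ne_top,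
          mul_one]
  rcases eq_zero_or_pos (μ K) with h | h
  · exfalso
    have h1 : (1 : ℝ≥0∞) ≤ μ K + μ Kᶜ := by
      rw [← measure_univ (μ := μ), ← Set.union_compl_self K]
      exact measure_union_le _ _
    rw [h, zero_add] at h1
    have := h1.trans hcompl
    norm_num at this
  · exact h

end

theorem shy_iff_haar_null {X : Type*} [NormedAddCommGroup X] [NormedSpace ℝ X]
    [CompleteSpace X] [TopologicalSpace.SeparableSpace X]
    [MeasurableSpace X] [BorelSpace X]
    (S : Set X) (hS : MeasurableSet S) :
    IsShyBorel S ↔ ∃ μ : Measure X, IsProbabilityMeasure μ ∧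
      ∀ x : X, μ ((· + x) '' S) = 0 := by
  constructor
  · rintro ⟨-, μ, hμ, -, h⟩
    exact ⟨μ, hμ, h⟩
  · rintro ⟨μ, hμ, h⟩
    refine ⟨hS, ?_⟩
    obtain ⟨K, hKc, hKpos⟩ := exists_compact_pos_measure μ
    have hKm : MeasurableSet K := hKc.isClosed.measurableSet
    set ν : Measure X := (μ K)⁻¹ • μ.restrict K with hν
    have hKfin : μ K ≠ ⊤ := measure_ne_top μ K
    have hprob : IsProbabilityMeasure ν := by
      constructor
      rw [hν]
      simp only [Measure.smul_apply, smul_eq_mul, Measure.restrict_apply_univ]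
      exact ENNReal.inv_mul_cancel hKpos.ne' hKfin
    refine ⟨ν, hprob, ⟨K, hKc, ?_⟩, fun x => ?_⟩
    · rw [hν]
      simp only [Measure.smul_apply, smul_eq_mul,
        Measure.restrict_apply hKm.compl, Set.compl_inter_self, measure_empty, mul_zero]
    · rw [hν]
      simp only [Measure.smul_apply, smul_eq_mul]
      have : μ.restrict K ((· + x) '' S) ≤ μ ((· + x) '' S) :=
        Measure.restrict_le_self _
      rw [h x] at this
      rw [le_antisymm this zero_le, mul_zero]
end
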